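/- arXiv:0705.3160 — 4 statements merged into one kernel-verified Lean document; each statement's English description precedes it below -/
import Mathlib

section
/- With the same hypotheses on T as in the unit-insertion setting (T(1)=1, T(F)=F, T(1⊗F_1⊗⋯)=T(F_1⊗⋯), T symmetric and multilinear), if Σ_{n≥1} F_n λ^n and Σ_{n≥1} G_n λ^n are formal power series with coefficients in V and T(e_⊗^{Σ_{n≥1} F_n λ^n}) = T(e_⊗^{Σ_{n≥1} G_n λ^n}) as formal power series in λ, then F_n = G_n for all n ≥ 1. -/
/-!
STATEMENT 1 (Tps2): if `T(e_⊗^{Σ_{n≥1} F_n λ^n}) = T(e_⊗^{Σ_{n≥1} G_n λ^n})` as formal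
power series in `λ`, then `F_n = G_n` for all `n ≥ 1`.  `T` is a symmetric multilinear
map on the tensor algebra of `V ⊆ A` with `T(1)=1`, `T(F)=F` and the unit-insertion
property.  The coefficient of `λ^N` of `T(e_⊗^{F(λ)})` is
`Σ_{k≥0} (1/k!) Σ_{n_1+⋯+n_k=N, n_i≥1} T(F_{n_1} ⊗ ⋯ ⊗ F_{n_k})`.
-/
theorem stmt_1
    {K : Type*} [Field K] [CharZero K]
    {A : Type*} [CommRing A] [Algebra K A]
    (V : Submodule K A) (h1 : (1 : A) ∈ V)
    (T : ∀ n : ℕ, MultilinearMap K (fun _ : Fin n => V) A)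
    (hsym : ∀ (n : ℕ) (σ : Equiv.Perm (Fin n)) (v : Fin n → V),
      T n (v ∘ σ) = T n v)
    (hT0 : T 0 (fun i => i.elim0) = 1)
    (hT1 : ∀ v : V, T 1 (fun _ => v) = (v : A))
    (hTins : ∀ (n : ℕ) (v : Fin n → V),
      T (n + 1) (Fin.cons ⟨1, h1⟩ v) = T n v)
    (F G : ℕ → V)
    (heq : ∀ N : ℕ,
      (∑ k ∈ Finset.range (N + 1), ((Nat.factorial k : K)⁻¹) •
        ∑ c ∈ Finset.univ.filter
            (fun c : Fin k → Fin (N + 1) =>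
              (∀ i, 1 ≤ (c i : ℕ)) ∧ (∑ i, (c i : ℕ)) = N),
          T k (fun i => F (c i)))
      = (∑ k ∈ Finset.range (N + 1), ((Nat.factorial k : K)⁻¹) •
        ∑ c ∈ Finset.univ.filter
            (fun c : Fin k → Fin (N + 1) =>
              (∀ i, 1 ≤ (c i : ℕ)) ∧ (∑ i, (c i : ℕ)) = N),
          T k (fun i => G (c i)))) :
    ∀ n : ℕ, 1 ≤ n → F n = G n := by

  intro n
  induction n using Nat.strong_induction_on with
  | _ N IH =>
    intro hN
    have hmain := heq N
    have h1mem : 1 ∈ Finset.range (N + 1) := by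
      simp [Finset.mem_range]; omega
    rw [← Finset.add_sum_erase _ _ h1mem, ← Finset.add_sum_erase _ _ h1mem] at hmain
    have hrest : (∑ k ∈ (Finset.range (N + 1)).erase 1, ((Nat.factorial k : K)⁻¹) •
        ∑ c ∈ Finset.univ.filter
            (fun c : Fin k → Fin (N + 1) =>
              (∀ i, 1 ≤ (c i : ℕ)) ∧ (∑ i, (c i : ℕ)) = N),
          T k (fun i => F (c i)))
        = (∑ k ∈ (Finset.range (N + 1)).erase 1, ((Nat.factorial k : K)⁻¹) •
        ∑ c ∈ Finset.univ.filter
            (fun c : Fin k → Fin (N + 1) =>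
              (∀ i, 1 ≤ (c i : ℕ)) ∧ (∑ i, (c i : ℕ)) = N),
          T k (fun i => G (c i))) := by
      refine Finset.sum_congr rfl (fun k hk => ?_)
      obtain ⟨hk1, hkr⟩ := Finset.mem_erase.mp hk
      congr 1
      refine Finset.sum_congr rfl (fun c hc => ?_)
      obtain ⟨hpos, hsum⟩ := (Finset.mem_filter.mp hc).2
      congr 1
      funext i
      -- k ≥ 2 since Fin k is inhabited and k ≠ 1
      have hk2 : 2 ≤ k := by
        rcases Nat.lt_or_ge k 2 with h | h
        · interval_cases k
          · exact absurd i.2 (by omega)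
          · exact absurd rfl hk1
        · exact h
      obtain ⟨j, hj⟩ := Fintype.exists_ne_of_one_lt_card (by simp; omega) i
      have hlt : (c i : ℕ) < N := by
        have h' := Finset.single_lt_sum (f := fun i => (c i : ℕ)) hj
          (Finset.mem_univ i) (Finset.mem_univ j) (hpos j)
          (fun _ _ _ => Nat.zero_le _)
        exact lt_of_lt_of_eq h' hsum
      exact IH (c i) hlt (hpos i)
    rw [hrest] at hmain
    have hkey := add_right_cancel hmain
    -- now compute the k = 1 term
    have hfil : Finset.univ.filter
        (fun c : Fin 1 → Fin (N + 1) =>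
          (∀ i, 1 ≤ (c i : ℕ)) ∧ (∑ i, (c i : ℕ)) = N)
        = {fun _ => (⟨N, Nat.lt_succ_self N⟩ : Fin (N + 1))} := by
      ext c
      simp only [Finset.mem_filter, Finset.mem_univ, true_and, Finset.mem_singleton,
        Fin.sum_univ_one, funext_iff, Fin.forall_fin_one, Fin.ext_iff]
      omega
    rw [hfil, Finset.sum_singleton, Finset.sum_singleton] at hkey
    simp only [Nat.factorial_one, Nat.cast_one, inv_one, one_smul, hT1] at hkey
    exact Subtype.coe_injective hkey
end

section
/- Linked cluster theorem for a commutative product with connected parts: let ⋆ be a commutative associative product on an algebra A with unit, and define recursively the connected part (F_1 ⋆ ⋯ ⋆ F_n)^c := F_1 ⋆ ⋯ ⋆ F_n − Σ_{|P|≥2} Π_{J∈P} (⋆_{j∈J} F_j)^c, where the sum is over partitions P of {1,…,n} into at least two blocks and Π denotes a second commutative multiplication • on A. Then for any F ∈ A (over a field of characteristic zero, working with formal series), e_⋆^F = exp_•(Σ_{n≥1} (F^{⋆ n})^c / n!), where e_⋆^F = 1 + Σ_{n≥1} F^{⋆ n}/n! and exp_• is the exponential with respect to •. -/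
/-- The set of partitions of `{0,…,n-1}`, encoded as finsets of nonempty pairwise
disjoint blocks covering `Finset.univ : Finset (Fin n)`. -/
def finPartitions (n : ℕ) : Finset (Finset (Finset (Fin n))) :=
  Finset.univ.filter fun P =>
    (∅ ∉ P) ∧ (∀ J ∈ P, ∀ K ∈ P, J ≠ K → J ∩ K = ∅) ∧ P.sup id = Finset.univ

open Finset




lemma cardP_le {N : ℕ} {P : Finset (Finset (Fin N))} (hP : P ∈ finPartitions N) :
    P.card ≤ N := by
  rw [finPartitions, mem_filter] at hP
  obtain ⟨-, hne, hdisj, hsup⟩ := hP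
  have hbi : P.biUnion id = Finset.univ := by rw [← Finset.sup_eq_biUnion, hsup]
  have hcard : ∑ J ∈ P, J.card = N := by
    rw [← Finset.card_biUnion, show (P.biUnion fun J => J) = P.biUnion id from rfl, hbi, Finset.card_univ, Fintype.card_fin]
    intro x hx y hy hxy
    exact Finset.disjoint_iff_inter_eq_empty.2 (hdisj x hx y hy hxy)
  calc P.card = ∑ J ∈ P, 1 := by simp
    _ ≤ ∑ J ∈ P, J.card := by
        refine Finset.sum_le_sum fun J hJ => ?_
        exact Nat.one_le_iff_ne_zero.2 (fun h => hne (by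
          have := Finset.card_eq_zero.1 h; rwa [this] at hJ))
    _ = N := hcard


lemma lemA {A : Type*} [CommRing A] (spow conn : ℕ → A) (hspow0 : spow 0 = 1)
    (hconn : ∀ n, 1 ≤ n → conn n = spow n -
      ∑ P ∈ (finPartitions n).filter (fun P => 2 ≤ P.card), ∏ J ∈ P, conn J.card) :
    ∀ n, spow n = ∑ P ∈ finPartitions n, ∏ J ∈ P, conn J.card := by
  intro n
  have : ∀ (hn : 1 ≤ n), (Finset.univ : Finset (Fin n)).Nonempty := fun hn => ⟨⟨0, hn⟩, Finset.mem_univ _⟩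
  rcases Nat.eq_zero_or_pos n with rfl | hn
  · have : finPartitions 0 = {∅} := by decide
    rw [this, hspow0]; simp
  · have hsplit := Finset.sum_filter_add_sum_filter_not (finPartitions n)
      (fun P => 2 ≤ P.card) (fun P => ∏ J ∈ P, conn J.card)
    have hsingle : (finPartitions n).filter (fun P => ¬ 2 ≤ P.card) = {{Finset.univ}} := by
      ext P
      simp only [mem_filter, mem_singleton, finPartitions, Finset.mem_univ, true_and, not_le]
      constructor
      · rintro ⟨⟨hne, hdisj, hsup⟩, hcard⟩
        interval_cases h : P.card
        · exfalso
          rw [Finset.card_eq_zero] at h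
          subst h
          simp only [Finset.sup_empty, Finset.bot_eq_empty] at hsup
          exact (this hn).ne_empty hsup.symm
        · rw [Finset.card_eq_one] at h
          obtain ⟨J, rfl⟩ := h
          rw [Finset.sup_singleton, id] at hsup
          rw [hsup]
      · rintro rfl
        refine ⟨⟨?_, ?_, ?_⟩, ?_⟩
        · simp only [Finset.mem_singleton]
          exact fun h => (this hn).ne_empty h.symm
        · intro J hJ Kk hK hne
          simp only [Finset.mem_singleton] at hJ hK
          exact absurd (hJ.trans hK.symm) hne
        · simp
        · simp
    rw [hsingle] at hsplit
    rw [← hsplit, Finset.sum_singleton, Finset.prod_singleton, Finset.card_univ,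
      Fintype.card_fin, hconn n hn]
    ring

def OP (N k : ℕ) (s : Finset (Fin N)) : Finset (Fin k → Finset (Fin N)) :=
  Finset.univ.filter fun B => (∀ i, B i ≠ ∅) ∧ (∀ i j, i ≠ j → B i ∩ B j = ∅) ∧
    Finset.univ.sup B = s

lemma OP_inj {N k : ℕ} {s : Finset (Fin N)} {B : Fin k → Finset (Fin N)}
    (hB : B ∈ OP N k s) : Function.Injective B := by
  rw [OP, mem_filter] at hB
  obtain ⟨-, hne, hdisj, -⟩ := hB
  intro i j hij
  by_contra h
  exact hne i (by rw [← hdisj i j h, hij, Finset.inter_self])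

lemma claimA {A : Type*} [CommRing A] (conn : ℕ → A) (N k : ℕ) :
    ∑ B ∈ OP N k Finset.univ, ∏ i, conn (B i).card =
      k.factorial • ∑ P ∈ (finPartitions N).filter (fun P => P.card = k),
        ∏ J ∈ P, conn J.card := by
  classical
  set T := (finPartitions N).filter (fun P => P.card = k) with hT
  have hmaps : ∀ B ∈ OP N k Finset.univ, Finset.univ.image B ∈ T := by
    intro B hB
    have hinj := OP_inj hB
    rw [OP, mem_filter] at hB
    obtain ⟨-, hne, hdisj, hsup⟩ := hB
    rw [hT, mem_filter, finPartitions, mem_filter]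
    refine ⟨⟨Finset.mem_univ _, ?_, ?_, ?_⟩, ?_⟩
    · intro h
      obtain ⟨i, -, hi⟩ := Finset.mem_image.1 h
      exact hne i hi
    · intro J hJ Kk hK hJK
      obtain ⟨i, -, rfl⟩ := Finset.mem_image.1 hJ
      obtain ⟨j, -, rfl⟩ := Finset.mem_image.1 hK
      exact hdisj i j (fun h => hJK (by rw [h]))
    · rw [Finset.sup_image]
      exact hsup
    · rw [Finset.card_image_of_injective _ hinj, Finset.card_univ, Fintype.card_fin]
  rw [← Finset.sum_fiberwise_of_maps_to hmaps (fun B => ∏ i, conn (B i).card)]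
  rw [Finset.smul_sum]
  refine Finset.sum_congr rfl fun P hP => ?_
  -- inner sum: each B in fiber has the same product, fiber has card k!
  have hPcard : P.card = k := (Finset.mem_filter.1 hP).2
  have hPpart : P ∈ finPartitions N := (Finset.mem_filter.1 hP).1
  rw [finPartitions, mem_filter] at hPpart
  obtain ⟨-, hPne, hPdisj, hPsup⟩ := hPpart
  have hconst : ∀ B ∈ (OP N k Finset.univ).filter (fun B => Finset.univ.image B = P),
      ∏ i, conn (B i).card = ∏ J ∈ P, conn J.card := by
    intro B hB
    rw [Finset.mem_filter] at hB
    rw [← hB.2, Finset.prod_image (fun i _ j _ h => OP_inj hB.1 h)]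
  rw [Finset.sum_congr rfl hconst, Finset.sum_const]
  congr 1
  -- fiber card = k!
  have e : Fin k ≃ {x // x ∈ P} := (finCongr hPcard.symm).trans P.equivFin.symm
  have key : (Finset.univ : Finset (Equiv.Perm (Fin k))).card =
      ((OP N k Finset.univ).filter (fun B => Finset.univ.image B = P)).card := by
    refine Finset.card_bij (fun σ _ => fun x => (e (σ x) : Finset (Fin N))) ?_ ?_ ?_
    · intro σ _
      have hmem : ∀ x, (e (σ x) : Finset (Fin N)) ∈ P := fun x => (e (σ x)).2
      have hinj' : Function.Injective (fun x => (e (σ x) : Finset (Fin N))) := by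
        intro x y h
        exact σ.injective (e.injective (Subtype.ext h))
      have himg : Finset.univ.image (fun x => (e (σ x) : Finset (Fin N))) = P := by
        apply Finset.Subset.antisymm
        · intro J hJ
          obtain ⟨i, -, rfl⟩ := Finset.mem_image.1 hJ
          exact hmem i
        · intro J hJ
          refine Finset.mem_image.2 ⟨σ.symm (e.symm ⟨J, hJ⟩), Finset.mem_univ _, ?_⟩
          simp
      rw [Finset.mem_filter, OP, Finset.mem_filter]
      refine ⟨⟨Finset.mem_univ _, ?_, ?_, ?_⟩, himg⟩
      · intro i h
        exact hPne (h ▸ hmem i)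
      · intro i j hij
        refine hPdisj _ (hmem i) _ (hmem j) ?_
        exact fun h => hij (hinj' h)
      · have := Finset.sup_image (Finset.univ : Finset (Fin k))
          (fun x => (e (σ x) : Finset (Fin N))) id
        rw [himg] at this
        rw [show (Finset.univ.sup fun x => (e (σ x) : Finset (Fin N))) =
          Finset.univ.sup (id ∘ fun x => (e (σ x) : Finset (Fin N))) from rfl, ← this, hPsup]
    · intro σ _ τ _ h
      apply Equiv.ext
      intro x
      have h2 : (e (σ x) : Finset (Fin N)) = (e (τ x) : Finset (Fin N)) := congrFun h x
      exact e.injective (Subtype.ext h2)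
    · intro B hB
      rw [Finset.mem_filter] at hB
      have hmemP : ∀ x, B x ∈ P := by
        intro x
        rw [← hB.2]
        exact Finset.mem_image.2 ⟨x, Finset.mem_univ _, rfl⟩
      have hinj := OP_inj hB.1
      have hbij : Function.Bijective (fun x : Fin k => e.symm ⟨B x, hmemP x⟩) := by
        rw [← Finite.injective_iff_bijective]
        intro x y h
        exact hinj (congrArg Subtype.val (e.symm.injective h) : B x = B y)
      refine ⟨Equiv.ofBijective _ hbij, Finset.mem_univ _, funext fun x => ?_⟩
      show ((e (e.symm ⟨B x, hmemP x⟩) : {x // x ∈ P}) : Finset (Fin N)) = B x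
      rw [e.apply_symm_apply]
  rw [← key, Finset.card_univ, Fintype.card_perm, Fintype.card_fin]

lemma mem_OP {N k : ℕ} {s : Finset (Fin N)} {B : Fin k → Finset (Fin N)} :
    B ∈ OP N k s ↔ (∀ i, B i ≠ ∅) ∧ (∀ i j, i ≠ j → B i ∩ B j = ∅) ∧
      Finset.univ.sup B = s := by
  rw [OP, mem_filter]
  exact ⟨fun h => h.2, fun h => ⟨mem_univ _, h⟩⟩

lemma sup_univ_snoc {k : ℕ} {α : Type*} [SemilatticeSup α] [OrderBot α]
    (B : Fin k → α) (T : α) :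
    (Finset.univ : Finset (Fin (k+1))).sup (Fin.snoc B T) = Finset.univ.sup B ⊔ T := by
  apply le_antisymm
  · apply Finset.sup_le
    intro i _
    induction i using Fin.lastCases with
    | last => rw [Fin.snoc_last]; exact le_sup_right
    | cast j => rw [Fin.snoc_castSucc]; exact le_trans (Finset.le_sup (mem_univ j)) le_sup_left
  · have h1 : ∀ i : Fin (k+1), (Fin.snoc B T : Fin (k+1) → α) i ≤
        Finset.univ.sup (Fin.snoc B T : Fin (k+1) → α) := fun i => Finset.le_sup (mem_univ i)
    apply sup_le
    · apply Finset.sup_le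
      intro j _
      have h2 := h1 (Fin.castSucc j)
      rwa [Fin.snoc_castSucc] at h2
    · have h2 := h1 (Fin.last k)
      rwa [Fin.snoc_last] at h2

lemma OP_peel {A : Type*} [CommRing A] (conn : ℕ → A) (N k : ℕ) (s : Finset (Fin N)) :
    ∑ B ∈ OP N (k+1) s, ∏ i, conn (B i).card
      = ∑ T ∈ s.powerset.filter (fun T => T ≠ ∅), conn T.card *
          ∑ B' ∈ OP N k (s \ T), ∏ i, conn (B' i).card := by
  classical
  simp_rw [Finset.mul_sum]
  rw [Finset.sum_sigma' (s.powerset.filter (fun T => T ≠ ∅)) (fun T => OP N k (s \ T))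
    (fun T B' => conn T.card * ∏ i, conn (B' i).card)]
  refine (Finset.sum_bij' (fun B _ => (⟨B (Fin.last k), Fin.init B⟩ :
      Σ _ : Finset (Fin N), (Fin k → Finset (Fin N))))
    (fun p _ => Fin.snoc p.2 p.1) ?_ ?_ ?_ ?_ ?_)
  · -- forward membership
    intro B hB
    rw [mem_OP] at hB
    obtain ⟨hne, hdisj, hsup⟩ := hB
    have hsub : ∀ i, B i ⊆ s := fun i => hsup ▸ Finset.le_sup (mem_univ i)
    rw [Finset.mem_sigma, Finset.mem_filter, Finset.mem_powerset]
    refine ⟨⟨hsub _, hne _⟩, ?_⟩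
    rw [mem_OP]
    refine ⟨fun i => hne _, fun i j hij => hdisj _ _
      (fun h => hij (Fin.castSucc_injective k h)), ?_⟩
    have hdec := sup_univ_snoc (Fin.init B) (B (Fin.last k))
    rw [Fin.snoc_init_self, hsup] at hdec
    have hdisjsup : Disjoint (Finset.univ.sup (Fin.init B)) (B (Fin.last k)) := by
      rw [Finset.disjoint_left]
      intro a ha haT
      obtain ⟨i, -, hi⟩ := Finset.mem_sup.1 ha
      have h3 : a ∈ B (Fin.castSucc i) ∩ B (Fin.last k) := Finset.mem_inter.2 ⟨hi, haT⟩
      rw [hdisj (Fin.castSucc i) (Fin.last k) (Fin.ne_of_lt (Fin.castSucc_lt_last i))] at h3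
      exact absurd h3 (Finset.notMem_empty a)
    dsimp only
    rw [hdec, Finset.sup_eq_union, Finset.union_sdiff_cancel_right hdisjsup]
  · -- backward membership
    rintro ⟨T, B'⟩ hp
    rw [Finset.mem_sigma, Finset.mem_filter, Finset.mem_powerset] at hp
    obtain ⟨⟨hTs, hTne⟩, hB'⟩ := hp
    rw [mem_OP] at hB' ⊢
    obtain ⟨hne, hdisj, hsup⟩ := hB'
    dsimp only at hTs hTne hne hdisj hsup ⊢
    have hsub : ∀ i, B' i ⊆ s \ T := fun i => hsup ▸ Finset.le_sup (mem_univ i)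
    refine ⟨?_, ?_, ?_⟩
    · intro i
      induction i using Fin.lastCases with
      | last => rw [Fin.snoc_last]; exact hTne
      | cast j => rw [Fin.snoc_castSucc]; exact hne j
    · intro i j hij
      induction i using Fin.lastCases with
      | last =>
        induction j using Fin.lastCases with
        | last => exact absurd rfl hij
        | cast j' =>
          rw [Fin.snoc_last, Fin.snoc_castSucc]
          rw [← Finset.disjoint_iff_inter_eq_empty]
          exact Finset.disjoint_of_subset_right (hsub j') Finset.disjoint_sdiff
      | cast i' =>
        induction j using Fin.lastCases with
        | last =>
          rw [Fin.snoc_last, Fin.snoc_castSucc]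
          rw [← Finset.disjoint_iff_inter_eq_empty]
          exact Finset.disjoint_of_subset_left (hsub i') Finset.sdiff_disjoint
        | cast j' =>
          rw [Fin.snoc_castSucc, Fin.snoc_castSucc]
          exact hdisj i' j' (fun h => hij (by rw [h]))
    · rw [sup_univ_snoc, hsup, Finset.sup_eq_union, Finset.sdiff_union_of_subset hTs]
  · -- left inverse
    intro B _
    exact Fin.snoc_init_self B
  · -- right inverse
    rintro ⟨T, B'⟩ _
    simp [Fin.snoc_last, Fin.init_snoc]
  · -- summand equality
    intro B _
    rw [Fin.prod_univ_castSucc]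
    rw [mul_comm]
    rfl

def comps (N k n : ℕ) : Finset (Fin k → Fin (N+1)) :=
  Finset.univ.filter fun c => (∀ i, 1 ≤ (c i : ℕ)) ∧ (∑ i, (c i : ℕ)) = n

lemma mem_comps {N k n : ℕ} {c : Fin k → Fin (N+1)} :
    c ∈ comps N k n ↔ (∀ i, 1 ≤ (c i : ℕ)) ∧ (∑ i, (c i : ℕ)) = n := by
  rw [comps, mem_filter]
  exact ⟨fun h => h.2, fun h => ⟨mem_univ _, h⟩⟩

lemma comps_peel {A : Type*} [AddCommMonoid A] (N k n : ℕ) (hn : n ≤ N)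
    (f : ℕ → (Fin k → Fin (N+1)) → A) :
    ∑ c ∈ comps N (k+1) n, f (c (Fin.last k) : ℕ) (Fin.init c)
      = ∑ m ∈ (range (n+1)).filter (fun m => 1 ≤ m), ∑ c' ∈ comps N k (n - m), f m c' := by
  classical
  rw [Finset.sum_sigma' ((range (n+1)).filter (fun m => 1 ≤ m)) (fun m => comps N k (n - m))
    (fun m c' => f m c')]
  refine Finset.sum_bij' (fun c _ => (⟨(c (Fin.last k) : ℕ), Fin.init c⟩ :
      Σ _ : ℕ, (Fin k → Fin (N+1))))
    (fun p hp => Fin.snoc p.2 (⟨p.1, by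
      have h := (Finset.mem_sigma.1 hp).1
      rw [Finset.mem_filter, Finset.mem_range] at h
      omega⟩ : Fin (N+1))) ?_ ?_ ?_ ?_ ?_
  · intro c hc
    rw [mem_comps] at hc
    obtain ⟨hge, hsum⟩ := hc
    have hle : (c (Fin.last k) : ℕ) ≤ n := hsum ▸ Finset.single_le_sum (f := fun i : Fin (k+1) => (c i : ℕ))
      (fun i _ => Nat.zero_le _) (mem_univ (Fin.last k))
    have hsum' : (∑ i : Fin k, (c (Fin.castSucc i) : ℕ)) + (c (Fin.last k) : ℕ) = n := by
      rw [← hsum]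
      exact (Fin.sum_univ_castSucc fun i => (c i : ℕ)).symm
    rw [Finset.mem_sigma, Finset.mem_filter, Finset.mem_range]
    refine ⟨⟨Nat.lt_succ_of_le hle, hge _⟩, ?_⟩
    rw [mem_comps]
    refine ⟨fun i => hge _, ?_⟩
    show (∑ i : Fin k, (c (Fin.castSucc i) : ℕ)) = n - (c (Fin.last k) : ℕ)
    omega
  · rintro ⟨m, c'⟩ hp
    have h := (Finset.mem_sigma.1 hp).1
    have h2 := (Finset.mem_sigma.1 hp).2
    rw [Finset.mem_filter, Finset.mem_range] at h
    rw [mem_comps] at h2 ⊢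
    dsimp only at h h2 ⊢
    obtain ⟨hge, hsum⟩ := h2
    constructor
    · intro i
      induction i using Fin.lastCases with
      | last => rw [Fin.snoc_last]; exact h.2
      | cast j => rw [Fin.snoc_castSucc]; exact hge j
    · rw [Fin.sum_univ_castSucc]
      simp only [Fin.snoc_castSucc, Fin.snoc_last]
      omega
  · intro c _
    dsimp only
    funext i
    induction i using Fin.lastCases with
    | last => rw [Fin.snoc_last]
    | cast j => rw [Fin.snoc_castSucc]; rfl
  · rintro ⟨m, c'⟩ _
    simp [Fin.snoc_last, Fin.init_snoc]
  · intro c _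
    rfl

lemma lemB {K : Type*} [Field K] [CharZero K] {A : Type*} [CommRing A] [Algebra K A]
    (conn : ℕ → A) (N : ℕ) : ∀ (k : ℕ) (s : Finset (Fin N)),
    ∑ B ∈ OP N k s, ∏ i, conn (B i).card =
      (s.card.factorial : K) • ∑ c ∈ comps N k s.card,
        (∏ i, ((c i : ℕ).factorial : K))⁻¹ • ∏ i, conn (c i : ℕ) := by
  intro k
  induction k with
  | zero =>
    intro s
    by_cases hs : s = ∅
    · subst hs
      have h1 : OP N 0 ∅ = Finset.univ := by
        ext B
        simp only [mem_OP, Finset.mem_univ, iff_true]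
        refine ⟨fun i => i.elim0, fun i => i.elim0, ?_⟩
        simp
      have h2 : comps N 0 0 = Finset.univ := by
        ext c
        simp only [mem_comps, Finset.mem_univ, iff_true]
        exact ⟨fun i => i.elim0, by simp⟩
      rw [h1]
      simp only [Finset.card_empty, Nat.factorial_zero, Nat.cast_one, one_smul]
      rw [h2]
      simp
    · have h1 : OP N 0 s = ∅ := by
        rw [Finset.eq_empty_iff_forall_notMem]
        intro B hB
        rw [mem_OP] at hB
        exact hs (by simpa using hB.2.2.symm)
      have h2 : comps N 0 s.card = ∅ := by
        rw [Finset.eq_empty_iff_forall_notMem]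
        intro c hc
        rw [mem_comps] at hc
        have := hc.2
        simp only [Finset.univ_eq_empty, Finset.sum_empty] at this
        exact hs (Finset.card_eq_zero.1 this.symm)
      rw [h1, h2]
      simp
  | succ k IH =>
    intro s
    have hsN : s.card ≤ N := by
      have := Finset.card_le_univ s
      simpa using this
    set n := s.card with hn
    set G : ℕ → A := fun m => if m = 0 then 0 else conn m *
      (((n - m).factorial : K) • ∑ c' ∈ comps N k (n - m),
        (∏ i, ((c' i : ℕ).factorial : K))⁻¹ • ∏ i, conn (c' i : ℕ)) with hG
    rw [OP_peel conn N k s]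
    have hIH : ∀ T ∈ s.powerset.filter (fun T => T ≠ ∅),
        conn T.card * ∑ B' ∈ OP N k (s \ T), ∏ i, conn (B' i).card = G T.card := by
      intro T hT
      rw [Finset.mem_filter, Finset.mem_powerset] at hT
      rw [IH (s \ T), Finset.card_sdiff_of_subset hT.1]
      have hTcard : T.card ≠ 0 := fun h => hT.2 (Finset.card_eq_zero.1 h)
      simp only [hG]
      rw [if_neg hTcard]
    rw [Finset.sum_congr rfl hIH]
    have hdrop : ∑ T ∈ s.powerset.filter (fun T => T ≠ ∅), G T.card
        = ∑ T ∈ s.powerset, G T.card := by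
      rw [Finset.sum_filter]
      refine Finset.sum_congr rfl fun T _ => ?_
      by_cases h : T = ∅
      · subst h
        simp [hG]
      · rw [if_pos h]
    rw [hdrop, Finset.sum_powerset_apply_card G, hn]
    rw [← hn]
    have hsplit : ∀ c ∈ comps N (k+1) n,
        ((∏ i : Fin (k+1), ((c i : ℕ).factorial : K))⁻¹ • ∏ i : Fin (k+1), conn (c i : ℕ))
          = (fun (m : ℕ) (c' : Fin k → Fin (N+1)) =>
              ((∏ i : Fin k, ((c' i : ℕ).factorial : K)) * ((m).factorial : K))⁻¹ •
                ((∏ i : Fin k, conn (c' i : ℕ)) * conn m)) (c (Fin.last k) : ℕ) (Fin.init c) := by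
      intro c _
      rw [Fin.prod_univ_castSucc (f := fun i => ((c i : ℕ).factorial : K)),
          Fin.prod_univ_castSucc (f := fun i => conn (c i : ℕ))]
      rfl
    rw [Finset.sum_congr rfl hsplit, comps_peel N k n hsN
      (fun (m : ℕ) (c' : Fin k → Fin (N+1)) =>
        ((∏ i : Fin k, ((c' i : ℕ).factorial : K)) * ((m).factorial : K))⁻¹ •
          ((∏ i : Fin k, conn (c' i : ℕ)) * conn m)), Finset.smul_sum]
    rw [← Finset.sum_filter_of_ne (p := fun m => 1 ≤ m)
      (fun m _ h => Nat.one_le_iff_ne_zero.2 (fun h0 => h (by subst h0; simp [hG])))]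
    refine Finset.sum_congr rfl fun m hm => ?_
    rw [Finset.mem_filter, Finset.mem_range] at hm
    obtain ⟨hmn, hm1⟩ := hm
    rw [Nat.lt_succ_iff] at hmn
    have hmne : m ≠ 0 := Nat.one_le_iff_ne_zero.1 hm1
    simp only [hG]
    rw [if_neg hmne]
    rw [mul_smul_comm, Finset.mul_sum, Finset.smul_sum, ← Nat.cast_smul_eq_nsmul K,
      Finset.smul_sum, Finset.smul_sum]
    refine Finset.sum_congr rfl fun c' _ => ?_
    rw [mul_smul_comm, smul_smul, smul_smul, smul_smul,
      mul_comm (∏ i, conn ((c' i : ℕ))) (conn m)]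
    congr 1
    have hP : (∏ i : Fin k, (((c' i : ℕ)).factorial : K)) ≠ 0 :=
      Finset.prod_ne_zero_iff.2 (fun i _ => Nat.cast_ne_zero.2 (Nat.factorial_ne_zero _))
    have hmf : ((m.factorial : ℕ) : K) ≠ 0 := Nat.cast_ne_zero.2 (Nat.factorial_ne_zero _)
    have key : ((n.choose m : ℕ) : K) * (m.factorial : K) * ((n-m).factorial : K)
        = (n.factorial : K) := by
      exact_mod_cast congrArg (Nat.cast : ℕ → K) (Nat.choose_mul_factorial_mul_factorial hmn)
    field_simp
    linear_combination key

/-!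
STATEMENT 2 (linked cluster theorem): for a commutative associative product `⋆`
(with unit `1` shared with the classical product `•` = ring multiplication of `A`),
define the connected parts `(F^{⋆n})^c` by the partition recursion; then
`e_⋆^F = exp_•(Σ_{n≥1} (F^{⋆n})^c/n!)`, i.e. comparing coefficients of the formal
grading parameter: `F^{⋆N}/N! = Σ_k (1/k!) Σ_{l_1+⋯+l_k=N, l_i≥1} Π_i (F^{⋆l_i})^c/l_i!`.
-/
theorem stmt_2
    {K : Type*} [Field K] [CharZero K]
    {A : Type*} [CommRing A] [Algebra K A]
    (star : A → A → A)
    (hcomm : ∀ x y, star x y = star y x)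
    (hassoc : ∀ x y z, star (star x y) z = star x (star y z))
    (hone : ∀ x, star 1 x = x)
    (haddl : ∀ x y z, star (x + y) z = star x z + star y z)
    (haddr : ∀ x y z, star x (y + z) = star x y + star x z)
    (hsmul : ∀ (r : K) (x y : A), star x (r • y) = r • star x y)
    (F : A)
    (spow : ℕ → A) (hspow0 : spow 0 = 1)
    (hspow : ∀ n, spow (n + 1) = star F (spow n))
    (conn : ℕ → A)
    (hconn : ∀ n, 1 ≤ n → conn n = spow n -
      ∑ P ∈ (finPartitions n).filter (fun P => 2 ≤ P.card),
        ∏ J ∈ P, conn J.card) :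
    ∀ N : ℕ, ((Nat.factorial N : K)⁻¹) • spow N =
      ∑ k ∈ Finset.range (N + 1), ((Nat.factorial k : K)⁻¹) •
        ∑ c ∈ Finset.univ.filter
            (fun c : Fin k → Fin (N + 1) =>
              (∀ i, 1 ≤ (c i : ℕ)) ∧ (∑ i, (c i : ℕ)) = N),
          (∏ i, (Nat.factorial (c i : ℕ) : K))⁻¹ • ∏ i, conn (c i : ℕ) := by
  intro N
  have hNfac : ((N.factorial : ℕ) : K) ≠ 0 := Nat.cast_ne_zero.2 (Nat.factorial_ne_zero _)
  have key : ∀ k : ℕ, ((k.factorial : K)⁻¹) • ∑ c ∈ comps N k N,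
      (∏ i, ((c i : ℕ).factorial : K))⁻¹ • ∏ i, conn (c i : ℕ)
      = (N.factorial : K)⁻¹ •
          ∑ P ∈ (finPartitions N).filter (fun P => P.card = k), ∏ J ∈ P, conn J.card := by
    intro k
    have hB := lemB (K := K) conn N k Finset.univ
    rw [Finset.card_univ, Fintype.card_fin] at hB
    have hOP : ∑ c ∈ comps N k N, (∏ i, ((c i : ℕ).factorial : K))⁻¹ • ∏ i, conn (c i : ℕ)
        = (N.factorial : K)⁻¹ • ∑ B ∈ OP N k Finset.univ, ∏ i, conn (B i).card := by
      rw [hB, inv_smul_smul₀ hNfac]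
    rw [hOP, claimA conn N k, ← Nat.cast_smul_eq_nsmul K, smul_smul, smul_smul]
    congr 1
    have hkfac : ((k.factorial : ℕ) : K) ≠ 0 := Nat.cast_ne_zero.2 (Nat.factorial_ne_zero _)
    field_simp
  have h2 : ∑ k ∈ Finset.range (N+1), ((k.factorial : K)⁻¹) • ∑ c ∈ comps N k N,
      (∏ i, ((c i : ℕ).factorial : K))⁻¹ • ∏ i, conn (c i : ℕ)
      = (N.factorial : K)⁻¹ • spow N := by
    rw [Finset.sum_congr rfl (fun k _ => key k), ← Finset.smul_sum]
    congr 1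
    rw [Finset.sum_fiberwise_of_maps_to
      (fun P hP => Finset.mem_range.2 (Nat.lt_succ_of_le (cardP_le hP)))
      (fun P => ∏ J ∈ P, conn J.card)]
    exact (lemA spow conn hspow0 hconn N).symm
  exact h2.symm
end

section
/- Recursive characterization of one-particle-irreducible parts equals the vertex function: define T^{1PI} by the recursion T^{1PI}(F^{⊗n}) = T^c(F^{⊗n}) − Σ_{k=2}^{n} Σ_{l_1+⋯+l_k=n, l_j≥1} (n!/(k! l_1!⋯l_k!)) T^c_tree(T^{1PI}(F^{⊗l_1}) ⊗ ⋯ ⊗ T^{1PI}(F^{⊗l_k})), with T^{1PI}(F)=F. Then the vertex function Γ defined by the partition recursion with scalar c satisfies Γ(e_⊗^S) = c^{-1} T^{1PI}(e_⊗^{cS}), i.e. Γ(S^{⊗n}) = c^{n−1} T^{1PI}(S^{⊗n}) for all n ≥ 1. -/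
/-!
STATEMENT 5 (Corollary `G=T`): the recursively defined 1PI part satisfies
`Γ(e_⊗^S) = c⁻¹ T^{1PI}(e_⊗^{cS})`, i.e. `Γ(S^{⊗n}) = c^{n-1} T^{1PI}(S^{⊗n})`
for all `n ≥ 1`, where `T^{1PI}` is defined by the composition recursion
`T^{1PI}(F^{⊗n}) = T^c(F^{⊗n}) − Σ_{k=2}^n Σ_{l_1+⋯+l_k=n, l_j≥1} (n!/(k! l_1!⋯l_k!))
T^c_tree(T^{1PI}(F^{⊗l_1}) ⊗ ⋯ ⊗ T^{1PI}(F^{⊗l_k}))`, `T^{1PI}(F)=F`, and `Γ`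
satisfies the analogous recursion with the scalars `c^{n-1}`, `c^{k-1}`.
-/
theorem stmt_5
    {K : Type*} [Field K] [CharZero K]
    {A : Type*} [AddCommGroup A] [Module K A]
    (c : K) (hc : c ≠ 0)
    (Tctree : ∀ k : ℕ, MultilinearMap K (fun _ : Fin k => A) A)
    (hsym : ∀ (k : ℕ) (σ : Equiv.Perm (Fin k)) (w : Fin k → A),
      Tctree k (w ∘ σ) = Tctree k w)
    (S : A)
    (a : ℕ → A)            -- `a n = T^c(S^{⊗n})`
    (ha1 : a 1 = S)
    (T1PI : ℕ → A)
    (h1PI1 : T1PI 1 = S)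
    (h1PI : ∀ n : ℕ, 2 ≤ n → T1PI n = a n -
      ∑ k ∈ Finset.Icc 2 n,
        ∑ l ∈ Finset.univ.filter
            (fun l : Fin k → Fin (n + 1) =>
              (∀ i, 1 ≤ (l i : ℕ)) ∧ (∑ i, (l i : ℕ)) = n),
          ((Nat.factorial n : K) /
              ((Nat.factorial k : K) * ∏ i, (Nat.factorial (l i : ℕ) : K))) •
            Tctree k (fun i => T1PI (l i)))
    (g : ℕ → A)            -- `g n = Γ(S^{⊗n})`
    (hg1 : g 1 = S)
    (hg : ∀ n : ℕ, 2 ≤ n → g n = c ^ (n - 1) • a n -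
      ∑ k ∈ Finset.Icc 2 n,
        ∑ l ∈ Finset.univ.filter
            (fun l : Fin k → Fin (n + 1) =>
              (∀ i, 1 ≤ (l i : ℕ)) ∧ (∑ i, (l i : ℕ)) = n),
          (c ^ (k - 1) * ((Nat.factorial n : K) /
              ((Nat.factorial k : K) * ∏ i, (Nat.factorial (l i : ℕ) : K)))) •
            Tctree k (fun i => g (l i))) :
    ∀ n : ℕ, 1 ≤ n → g n = c ^ (n - 1) • T1PI n := by

  intro n
  induction n using Nat.strong_induction_on with
  | _ n ih =>
    intro hn
    rcases eq_or_lt_of_le hn with h1 | h2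
    · simp [← h1, hg1, h1PI1]
    · have h2n : 2 ≤ n := h2
      rw [hg n h2n, h1PI n h2n, smul_sub, Finset.smul_sum]
      congr 1
      refine Finset.sum_congr rfl fun k hk => ?_
      rw [Finset.smul_sum]
      refine Finset.sum_congr rfl fun l hl => ?_
      simp only [Finset.mem_filter] at hl
      obtain ⟨-, hl1, hlsum⟩ := hl
      have hk2 : 2 ≤ k := (Finset.mem_Icc.mp hk).1
      have hlt : ∀ i, (l i : ℕ) < n := by
        intro i
        have herase : ((Finset.univ : Finset (Fin k)).erase i).Nonempty := by
          rw [← Finset.card_pos, Finset.card_erase_of_mem (Finset.mem_univ i),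
            Finset.card_univ, Fintype.card_fin]
          omega
        have hpos : 0 < ∑ j ∈ (Finset.univ : Finset (Fin k)).erase i, (l j : ℕ) :=
          Finset.sum_pos (fun j _ => hl1 j) herase
        have hsplit : (l i : ℕ) + ∑ j ∈ (Finset.univ : Finset (Fin k)).erase i, (l j : ℕ)
            = ∑ j, (l j : ℕ) := Finset.add_sum_erase (Finset.univ : Finset (Fin k))
          (fun j => (l j : ℕ)) (Finset.mem_univ i)
        omega
      have hrec : (fun i => g (l i)) = fun i => c ^ ((l i : ℕ) - 1) • T1PI (l i) :=
        funext fun i => ih _ (hlt i) (hl1 i)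
      rw [hrec, (Tctree k).map_smul_univ, smul_smul, smul_smul]
      congr 1
      rw [Finset.prod_pow_eq_pow_sum]
      have hE : k + ∑ i, ((l i : ℕ) - 1) = n := by
        calc k + ∑ i, ((l i : ℕ) - 1)
            = ∑ i : Fin k, (1 : ℕ) + ∑ i, ((l i : ℕ) - 1) := by
              simp
          _ = ∑ i : Fin k, (1 + ((l i : ℕ) - 1)) := by
              rw [← Finset.sum_add_distrib]
          _ = ∑ i, (l i : ℕ) := Finset.sum_congr rfl fun i _ => by
              have := hl1 i; omega
          _ = n := hlsum
      calc c ^ (k - 1) * (↑n.factorial / (↑k.factorial * ∏ i, (↑(l i : ℕ).factorial : K)))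
            * c ^ (∑ i, ((l i : ℕ) - 1))
          = c ^ ((k - 1) + ∑ i, ((l i : ℕ) - 1))
            * (↑n.factorial / (↑k.factorial * ∏ i, (↑(l i : ℕ).factorial : K))) := by
            rw [pow_add]; ring
        _ = _ := by
            congr 2
            omega
end

section
/- Vanishing of the anomaly is equivalent to the Master Ward Identity: with Δ_A the unique anomaly map determined by the anomalous MWI recursion, one has Δ_A ≡ 0 if and only if R(e_⊗^S, A + δ_A S) = ∫ dx h(x) R(e_⊗^S, Q(x)) δS_0/δφ(x) holds for every interaction S. -/
/-!
STATEMENT 17 (Theorem `satzQAP` (iv)): the anomaly map `Δ_A` determined by the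
anomalous MWI vanishes identically if and only if the Master Ward Identity
`R(e_⊗^S, A + δ_A S) = ∫ dx h(x) R(e_⊗^S, Q(x)) δS_0/δφ(x)` holds for every
interaction `S` (order by order in `S`).
-/

open Finset in

open Finset in
lemma neg_one_pow_sub' {a b : ℕ} (h : b ≤ a) : (-1 : ℤ) ^ (a - b) = (-1) ^ a * (-1) ^ b := by
  have h2 : (-1 : ℤ) ^ b * (-1) ^ b = 1 := by
    rw [← pow_add, ← two_mul, pow_mul]; norm_num
  calc (-1 : ℤ) ^ (a - b) = (-1) ^ (a - b) * ((-1) ^ b * (-1) ^ b) := by rw [h2, mul_one]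
    _ = ((-1) ^ (a - b) * (-1) ^ b) * (-1) ^ b := by ring
    _ = (-1) ^ a * (-1) ^ b := by rw [← pow_add, Nat.sub_add_cancel h]

open Finset in
lemma polar_coeff {n : ℕ} (r : Fin n → Fin n) :
    (∑ T ∈ (univ : Finset (Fin n)).powerset,
       if ∀ i, r i ∈ T then (-1 : ℤ) ^ (n - T.card) else 0)
    = if Function.Surjective r then 1 else 0 := by
  classical
  set E : Finset (Fin n) := Finset.image r univ with hE
  have hcond : ∀ T : Finset (Fin n), (∀ i, r i ∈ T) ↔ E ⊆ T := by
    intro T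
    constructor
    · intro h x hx
      rcases Finset.mem_image.1 hx with ⟨i, -, rfl⟩
      exact h i
    · intro h i
      exact h (Finset.mem_image.2 ⟨i, Finset.mem_univ i, rfl⟩)
  have step1 : (∑ T ∈ (univ : Finset (Fin n)).powerset,
       if ∀ i, r i ∈ T then (-1 : ℤ) ^ (n - T.card) else 0)
      = ∑ T ∈ (univ : Finset (Fin n)).powerset.filter (fun T => E ⊆ T),
          (-1 : ℤ) ^ (n - T.card) := by
    rw [sum_filter]
    exact Finset.sum_congr rfl fun T _ => if_congr (hcond T) rfl rfl
  have step2 : ∑ T ∈ (univ : Finset (Fin n)).powerset.filter (fun T => E ⊆ T),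
          (-1 : ℤ) ^ (n - T.card)
      = ∑ U ∈ Eᶜ.powerset, (-1 : ℤ) ^ (n - (E.card + U.card)) := by
    refine Finset.sum_nbij' (i := fun T => T \ E) (j := fun U => E ∪ U) ?_ ?_ ?_ ?_ ?_
    · intro T hT
      simp only [mem_filter, mem_powerset] at hT
      simp only [mem_powerset]
      intro x hx
      simp only [mem_sdiff] at hx
      simp [Finset.mem_compl, hx.2]
    · intro U hU
      simp only [mem_powerset] at hU
      simp only [mem_filter, mem_powerset]
      exact ⟨subset_univ _, Finset.subset_union_left⟩
    · intro T hT
      simp only [mem_filter, mem_powerset] at hT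
      exact Finset.union_sdiff_of_subset hT.2
    · intro U hU
      simp only [mem_powerset] at hU
      refine Finset.union_sdiff_cancel_left ?_
      exact Finset.disjoint_left.2 fun x hxE hxU => (Finset.mem_compl.1 (hU hxU)) hxE
    · intro T hT
      simp only [mem_filter, mem_powerset] at hT
      congr 1
      rw [Finset.card_sdiff_of_subset hT.2]
      have hcard : E.card ≤ T.card := Finset.card_le_card hT.2
      omega
  have hcc : E.card + Eᶜ.card = n := by
    simpa using Finset.card_add_card_compl E
  have step3 : ∑ U ∈ Eᶜ.powerset, (-1 : ℤ) ^ (n - (E.card + U.card))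
      = (-1 : ℤ) ^ Eᶜ.card * ∑ U ∈ Eᶜ.powerset, (-1 : ℤ) ^ U.card := by
    rw [Finset.mul_sum]
    refine Finset.sum_congr rfl fun U hU => ?_
    have hU' : U.card ≤ Eᶜ.card := Finset.card_le_card (Finset.mem_powerset.1 hU)
    have : n - (E.card + U.card) = Eᶜ.card - U.card := by omega
    rw [this, neg_one_pow_sub' hU']
  rw [step1, step2, step3, Finset.sum_powerset_neg_one_pow_card]
  by_cases hsurj : Function.Surjective r
  · have hEuniv : E = univ := by
      ext x
      simp only [hE, Finset.mem_image, Finset.mem_univ, iff_true]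
      rcases hsurj x with ⟨i, rfl⟩
      exact ⟨i, trivial, rfl⟩
    rw [hEuniv]
    simp [hsurj]
  · have hEne : Eᶜ ≠ ∅ := by
      intro hc
      apply hsurj
      intro y
      have : E = univ := by
        exact (Finset.compl_eq_empty_iff E).1 hc
      have hy : y ∈ E := this ▸ Finset.mem_univ y
      rcases Finset.mem_image.1 hy with ⟨i, -, rfl⟩
      exact ⟨i, rfl⟩
    rw [if_neg hEne, if_neg hsurj, mul_zero]

open Finset in
lemma polar_zero {K : Type*} [Field K] [CharZero K]
    {V A : Type*} [AddCommGroup V] [Module K V] [AddCommGroup A] [Module K A]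
    {n : ℕ} (f : MultilinearMap K (fun _ : Fin n => V) A)
    (hsym : ∀ (σ : Equiv.Perm (Fin n)) (v : Fin n → V), f (v ∘ σ) = f v)
    (hdiag : ∀ S : V, f (fun _ => S) = 0)
    (v : Fin n → V) : f v = 0 := by
  classical
  have key : (0 : A) = (n.factorial : ℤ) • f v := by
    calc (0 : A) = ∑ T ∈ (univ : Finset (Fin n)).powerset,
            (-1 : ℤ) ^ (n - T.card) • f (fun _ => ∑ i ∈ T, v i) := by
          simp [hdiag]
      _ = ∑ T ∈ (univ : Finset (Fin n)).powerset,
            ∑ r ∈ Fintype.piFinset (fun _ : Fin n => T),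
              (-1 : ℤ) ^ (n - T.card) • f (fun i => v (r i)) := by
          refine Finset.sum_congr rfl fun T _ => ?_
          rw [f.map_sum_finset (fun _ j => v j) (fun _ => T), Finset.smul_sum]
      _ = ∑ T ∈ (univ : Finset (Fin n)).powerset,
            ∑ r ∈ (univ : Finset (Fin n → Fin n)),
              (if ∀ i, r i ∈ T then (-1 : ℤ) ^ (n - T.card) else 0) • f (fun i => v (r i)) := by
          refine Finset.sum_congr rfl fun T _ => ?_
          have hpi : Fintype.piFinset (fun _ : Fin n => T)
              = (univ : Finset (Fin n → Fin n)).filter (fun r => ∀ i, r i ∈ T) := by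
            ext r
            simp [Fintype.mem_piFinset]
          rw [hpi, Finset.sum_filter]
          refine Finset.sum_congr rfl fun r _ => ?_
          split <;> simp
      _ = ∑ r ∈ (univ : Finset (Fin n → Fin n)),
            (∑ T ∈ (univ : Finset (Fin n)).powerset,
              if ∀ i, r i ∈ T then (-1 : ℤ) ^ (n - T.card) else 0) • f (fun i => v (r i)) := by
          rw [Finset.sum_comm]
          exact Finset.sum_congr rfl fun r _ => (Finset.sum_smul).symm
      _ = ∑ r ∈ (univ : Finset (Fin n → Fin n)),
            (if Function.Surjective r then (1 : ℤ) else 0) • f (fun i => v (r i)) := by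
          refine Finset.sum_congr rfl fun r _ => ?_
          rw [polar_coeff r]
      _ = ∑ r ∈ (univ : Finset (Fin n → Fin n)).filter (fun r => Function.Surjective r),
            f (fun i => v (r i)) := by
          rw [Finset.sum_filter]
          refine Finset.sum_congr rfl fun r _ => ?_
          split <;> simp
      _ = ∑ _σ : Equiv.Perm (Fin n), f v := by
          refine Finset.sum_bij' (i := fun (r : Fin n → Fin n)
              (hr : r ∈ (univ : Finset (Fin n → Fin n)).filter (fun r => Function.Surjective r)) =>
              Equiv.ofBijective r (Finite.surjective_iff_bijective.1 (by
                simpa using (Finset.mem_filter.1 hr).2)))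
            (j := fun σ _ => (σ : Fin n → Fin n)) ?_ ?_ ?_ ?_ ?_
          · intro r hr; exact Finset.mem_univ _
          · intro σ _
            simp only [Finset.mem_filter, Finset.mem_univ, true_and]
            exact σ.surjective
          · intro r hr; rfl
          · intro σ _
            ext x
            rfl
          · intro r hr
            have := hsym (Equiv.ofBijective r (Finite.surjective_iff_bijective.1 (by
                simpa using (Finset.mem_filter.1 hr).2))) v
            rw [← this]
            rfl
      _ = (n.factorial : ℤ) • f v := by
          rw [Finset.sum_const, Finset.card_univ, Fintype.card_perm, Fintype.card_fin]
          simp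
  have keyK : ((n.factorial : K)) • f v = 0 := by
    have : ((n.factorial : ℤ) : K) • f v = 0 := by
      rw [Int.cast_smul_eq_zsmul, ← key]
    simpa using this
  have hne : (n.factorial : K) ≠ 0 := by
    exact_mod_cast Nat.cast_ne_zero.2 (Nat.factorial_ne_zero n)
  rcases smul_eq_zero.1 keyK with h | h
  · exact absurd h hne
  · exact h

theorem stmt_17
    {K : Type*} [Field K] [CharZero K]
    {V A : Type*} [AddCommGroup V] [Module K V] [AddCommGroup A] [Module K A]
    (R : ∀ n : ℕ, MultilinearMap K (fun _ : Fin n => V) (A →ₗ[K] A))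
    (hRsym : ∀ (n : ℕ) (σ : Equiv.Perm (Fin n)) (v : Fin n → V) (a : A),
      R n (v ∘ σ) a = R n v a)
    (hR0 : ∀ a : A, R 0 (fun i => i.elim0) a = a)
    (Aelt : A) (δA : V →ₗ[K] A)
    (ρ : ∀ n : ℕ, MultilinearMap K (fun _ : Fin n => V) A)
    (hρsym : ∀ (n : ℕ) (σ : Equiv.Perm (Fin n)) (v : Fin n → V), ρ n (v ∘ σ) = ρ n v)
    -- `Δ` is the anomaly map: symmetric, `Δ(1)=0`, and it satisfies the anomalous MWI
    (Δ : ∀ n : ℕ, MultilinearMap K (fun _ : Fin n => V) A)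
    (hΔsym : ∀ (n : ℕ) (σ : Equiv.Perm (Fin n)) (v : Fin n → V), Δ n (v ∘ σ) = Δ n v)
    (hΔ0 : Δ 0 (fun i => i.elim0) = 0)
    (hanom : ∀ (S : V) (n : ℕ),
      R n (fun _ => S) Aelt + (n : K) • R (n - 1) (fun _ => S) (δA S)
        + ∑ l ∈ Finset.range (n + 1),
            (n.choose l : K) • R (n - l) (fun _ => S) (Δ l (fun _ => S))
      = ρ n (fun _ => S)) :
    (∀ (n : ℕ) (v : Fin n → V), Δ n v = 0)
      ↔ (∀ (S : V) (n : ℕ),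
          R n (fun _ => S) Aelt + (n : K) • R (n - 1) (fun _ => S) (δA S)
            = ρ n (fun _ => S)) := by
  constructor
  · intro h S n
    have h1 := hanom S n
    have hsum : ∑ l ∈ Finset.range (n + 1),
        (n.choose l : K) • R (n - l) (fun _ => S) (Δ l (fun _ => S)) = 0 := by
      refine Finset.sum_eq_zero fun l _ => ?_
      rw [h l (fun _ => S), map_zero, smul_zero]
    rw [hsum, add_zero] at h1
    exact h1
  · intro hMWI
    have hdiag : ∀ n : ℕ, ∀ S : V, Δ n (fun _ => S) = 0 := by
      intro n
      induction n using Nat.strong_induction_on with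
      | _ n ih =>
        intro S
        have h1 := hanom S n
        rw [hMWI S n] at h1
        have hsum : ∑ l ∈ Finset.range (n + 1),
            (n.choose l : K) • R (n - l) (fun _ => S) (Δ l (fun _ => S)) = 0 :=
          (add_eq_left).1 h1
        rw [Finset.sum_range_succ] at hsum
        have hlow : ∑ l ∈ Finset.range n,
            (n.choose l : K) • R (n - l) (fun _ => S) (Δ l (fun _ => S)) = 0 := by
          refine Finset.sum_eq_zero fun l hl => ?_
          rw [ih l (Finset.mem_range.1 hl) S, map_zero, smul_zero]
        rw [hlow, zero_add, Nat.choose_self, Nat.cast_one, one_smul, Nat.sub_self] at hsum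
        have hfun : (fun _ : Fin 0 => S) = (fun i : Fin 0 => i.elim0) :=
          funext fun i => i.elim0
        rw [hfun, hR0] at hsum
        exact hsum
    intro n v
    exact polar_zero (Δ n) (hΔsym n) (hdiag n) v
end
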